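/- Under the hypotheses: E = [E_T E_C] ∈ ℝ^{n×m} with Eᵀ𝟙_n = 0, E_T ∈ ℝ^{n×(n−1)} of rank n−1, every column of E_C in the column space of E_T, W = diag(w) with w_k > 0, R = [I_{n−1} (E_TᵀE_T)⁻¹E_TᵀE_C], P ∈ ℝ^{m×q} a selection matrix of distinct standard basis vectors indexed by a nonempty attacked-edge set S, and Δ ∈ ℝ^{q×q} diagonal with ‖Δ‖ < ‖Pᵀ Rᵀ (R W Rᵀ)⁻¹ R P‖⁻¹ — the perturbed consensus protocol achieves consensus: for every D ≥ 1 and every x₀ ∈ ℝ^{nD}, writing L_Δ = E (W + P Δ Pᵀ) Eᵀ, the trajectory exp(−t (L_Δ ⊗ I_D)) x₀ converges, as t → ∞, to ((𝟙_n 𝟙_nᵀ / n) ⊗ I_D) x₀, which lies in the agreement set {𝟙_n ⊗ ω : ω ∈ ℝ^D}. -/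

import Mathlib

open Matrix Filter
open scoped Matrix.Norms.L2Operator Kronecker

/-!
Every column of `E_C` lies in the range of `E_T`, so `E = E_T R` and
`L_Δ = E_T M E_Tᵀ` with `M = R (W + P Δ Pᵀ) Rᵀ`. Writing `Q = R W Rᵀ` (positive definite, as `R`
contains an identity block) and `z = Pᵀ Rᵀ y`, factoring `Q = S²` gives
`‖z‖² ≤ ‖Pᵀ Rᵀ Q⁻¹ R P‖ yᵀ Q y`, so the small-gain bound forces `|zᵀ Δ z| < yᵀ Q y` and `M` is
positive definite. Hence `L_Δ` is positive semidefinite with kernel `ker E_Tᵀ = span 𝟙`, and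
`exp (-t L_Δ) = cfc (x ↦ e^{-t x}) L_Δ` converges to the spectral projection onto that kernel,
which is `𝟙𝟙ᵀ/n`. Finally `exp (-t (L_Δ ⊗ I)) = exp (-t L_Δ) ⊗ I`.
-/

namespace Matrix

variable {ι κ μ : Type*} [Fintype ι]

section Rank

variable {K : Type*} [Field K]

lemma finrank_ker_mulVecLin (A : Matrix κ ι K) :
    Module.finrank K (LinearMap.ker A.mulVecLin) = Fintype.card ι - A.rank := by
  have := LinearMap.finrank_range_add_finrank_ker A.mulVecLin
  rw [Module.finrank_fintype_fun_eq_card] at this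
  rw [rank]
  omega

lemma mulVec_injective_of_rank_eq_card {A : Matrix κ ι K} (hA : A.rank = Fintype.card ι) :
    Function.Injective A.mulVec := by
  have : LinearMap.ker A.mulVecLin = ⊥ := by
    rw [← Submodule.finrank_eq_zero, finrank_ker_mulVecLin, hA, Nat.sub_self]
  exact LinearMap.ker_eq_bot.mp this

lemma ker_mulVecLin_eq_span_singleton {A : Matrix κ ι K} (hA : A.rank + 1 = Fintype.card ι)
    {v : ι → K} (hv : v ≠ 0) (hAv : A *ᵥ v = 0) :
    LinearMap.ker A.mulVecLin = K ∙ v := by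
  refine (Submodule.eq_of_le_of_finrank_le ?_ ?_).symm
  · rwa [Submodule.span_singleton_le_iff_mem, LinearMap.mem_ker, mulVecLin_apply]
  · rw [finrank_ker_mulVecLin, finrank_span_singleton hv]
    omega

end Rank

section QuadraticForm

variable [Fintype κ]

lemma dotProduct_mul_mul_transpose_mulVec (A : Matrix ι κ ℝ) (M : Matrix κ κ ℝ) (y : ι → ℝ) :
    y ⬝ᵥ ((A * M * Aᵀ) *ᵥ y) = (Aᵀ *ᵥ y) ⬝ᵥ (M *ᵥ (Aᵀ *ᵥ y)) := by
  rw [← mulVec_mulVec, ← mulVec_mulVec, dotProduct_mulVec, ← mulVec_transpose]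

lemma PosDef.transpose_mulVec_eq_zero_of_mul_mul_transpose_mulVec {M : Matrix ι ι ℝ}
    (hM : M.PosDef) (A : Matrix κ ι ℝ) {y : κ → ℝ} (hy : (A * M * Aᵀ) *ᵥ y = 0) :
    Aᵀ *ᵥ y = 0 := by
  by_contra h
  have := hM.dotProduct_mulVec_pos h
  rw [star_trivial, ← dotProduct_mul_mul_transpose_mulVec, hy, dotProduct_zero] at this
  exact this.false

lemma dotProduct_self_eq_norm_sq (v : ι → ℝ) : v ⬝ᵥ v = ‖WithLp.toLp 2 v‖ ^ 2 := by
  rw [← real_inner_self_eq_norm_sq, EuclideanSpace.inner_toLp_toLp, star_trivial]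

variable [DecidableEq ι]

lemma abs_dotProduct_mulVec_le (A : Matrix ι ι ℝ) (v : ι → ℝ) :
    |v ⬝ᵥ (A *ᵥ v)| ≤ ‖A‖ * (v ⬝ᵥ v) := by
  have hCS := abs_real_inner_le_norm (WithLp.toLp 2 v) (WithLp.toLp 2 (A *ᵥ v))
  rw [EuclideanSpace.inner_toLp_toLp, star_trivial, dotProduct_comm] at hCS
  calc |v ⬝ᵥ (A *ᵥ v)| ≤ ‖WithLp.toLp 2 v‖ * ‖WithLp.toLp 2 (A *ᵥ v)‖ := hCS
    _ ≤ ‖WithLp.toLp 2 v‖ * (‖A‖ * ‖WithLp.toLp 2 v‖) := by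
        gcongr; exact A.l2_opNorm_mulVec _
    _ = ‖A‖ * (v ⬝ᵥ v) := by rw [dotProduct_self_eq_norm_sq]; ring

variable [DecidableEq κ]

lemma transpose_mulVec_dotProduct_self_le (A : Matrix ι κ ℝ) (v : ι → ℝ) :
    (Aᵀ *ᵥ v) ⬝ᵥ (Aᵀ *ᵥ v) ≤ ‖Aᵀ * A‖ * (v ⬝ᵥ v) := by
  have hnorm : ‖Aᵀ * A‖ = ‖Aᵀ‖ ^ 2 := by
    rw [← conjTranspose_eq_transpose_of_trivial, l2_opNorm_conjTranspose_mul_self,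
      l2_opNorm_conjTranspose, sq]
  rw [dotProduct_self_eq_norm_sq, dotProduct_self_eq_norm_sq, hnorm, ← mul_pow]
  gcongr
  exact Aᵀ.l2_opNorm_mulVec _

open scoped MatrixOrder in
lemma PosDef.transpose_mulVec_dotProduct_self_le {Q : Matrix ι ι ℝ} (hQ : Q.PosDef)
    (K : Matrix ι κ ℝ) (y : ι → ℝ) :
    (Kᵀ *ᵥ y) ⬝ᵥ (Kᵀ *ᵥ y) ≤ ‖Kᵀ * Q⁻¹ * K‖ * (y ⬝ᵥ (Q *ᵥ y)) := by
  set S := CFC.sqrt Q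
  have hSS : S * S = Q := CFC.sqrt_mul_sqrt_self Q hQ.posSemidef.nonneg
  have hST : Sᵀ = S := by simpa using (CFC.sqrt_nonneg Q).posSemidef.isHermitian.eq
  have hS : IsUnit S.det :=
    (isUnit_iff_isUnit_det S).mp ((CFC.isUnit_sqrt_iff Q hQ.posSemidef.nonneg).mpr hQ.isUnit)
  set G := S⁻¹ * K
  have hGT : Gᵀ = Kᵀ * S⁻¹ := by rw [transpose_mul, transpose_nonsing_inv, hST]
  have hy : Kᵀ *ᵥ y = Gᵀ *ᵥ (S *ᵥ y) := by
    rw [mulVec_mulVec, hGT, Matrix.mul_assoc, nonsing_inv_mul _ hS, Matrix.mul_one]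
  have hN : Gᵀ * G = Kᵀ * Q⁻¹ * K := by
    rw [hGT, ← hSS, Matrix.mul_inv_rev]
    simp only [G, Matrix.mul_assoc]
  have hSy : (S *ᵥ y) ⬝ᵥ (S *ᵥ y) = y ⬝ᵥ (Q *ᵥ y) := by
    rw [← hSS, ← mulVec_mulVec, dotProduct_mulVec, ← mulVec_transpose, hST, dotProduct_comm]
  rw [hy, ← hN, ← hSy]
  exact Matrix.transpose_mulVec_dotProduct_self_le G _

lemma PosDef.add_mul_mul_transpose {Q : Matrix ι ι ℝ} (hQ : Q.PosDef)
    {Δ : Matrix κ κ ℝ} (hΔ : Δ.IsHermitian) (K : Matrix ι κ ℝ)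
    (hsmall : ‖Δ‖ < ‖Kᵀ * Q⁻¹ * K‖⁻¹) :
    (Q + K * Δ * Kᵀ).PosDef := by
  set N := Kᵀ * Q⁻¹ * K
  have hgain : ‖Δ‖ * ‖N‖ < 1 := by
    rcases (norm_nonneg N).eq_or_lt with h0 | hpos
    · simp [← h0]
    · simpa [hpos.ne'] using mul_lt_mul_of_pos_right hsmall hpos
  refine .of_dotProduct_mulVec_pos (hQ.isHermitian.add ?_) fun y hy => ?_
  · simpa using isHermitian_mul_mul_conjTranspose K hΔ
  set z := Kᵀ *ᵥ y
  have hQy : 0 < y ⬝ᵥ (Q *ᵥ y) := by simpa using hQ.dotProduct_mulVec_pos hy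
  have hz : z ⬝ᵥ z ≤ ‖N‖ * (y ⬝ᵥ (Q *ᵥ y)) := hQ.transpose_mulVec_dotProduct_self_le K y
  have hΔz : |z ⬝ᵥ (Δ *ᵥ z)| ≤ ‖Δ‖ * (z ⬝ᵥ z) := abs_dotProduct_mulVec_le Δ z
  rw [star_trivial, add_mulVec, dotProduct_add, dotProduct_mul_mul_transpose_mulVec]
  nlinarith [neg_abs_le (z ⬝ᵥ (Δ *ᵥ z)), norm_nonneg Δ]

lemma posDef_mul_add_mul_transpose_of_norm_lt [Fintype μ] {W : Matrix μ μ ℝ}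
    (hW : W.PosDef) {R : Matrix ι μ ℝ} (hR : Function.Injective R.vecMul) {Δ : Matrix κ κ ℝ}
    (hΔ : Δ.IsHermitian) (P : Matrix μ κ ℝ)
    (hsmall : ‖Δ‖ < ‖Pᵀ * Rᵀ * (R * W * Rᵀ)⁻¹ * R * P‖⁻¹) :
    (R * (W + P * Δ * Pᵀ) * Rᵀ).PosDef := by
  have hQ : (R * W * Rᵀ).PosDef := by simpa using hW.mul_mul_conjTranspose_same hR
  simpa [Matrix.mul_add, Matrix.add_mul, Matrix.mul_assoc] using
    hQ.add_mul_mul_transpose hΔ (R * P) (by rwa [transpose_mul, ← Matrix.mul_assoc])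

end QuadraticForm

section CutSet

variable [Fintype κ] [DecidableEq ι]

lemma inv_transpose_mul_self_mul_transpose_mul_self {A : Matrix κ ι ℝ}
    (hA : Function.Injective A.mulVec) : (Aᵀ * A)⁻¹ * Aᵀ * A = 1 := by
  have hAA : (Aᵀ * A).PosDef := by simpa using PosDef.conjTranspose_mul_self A hA
  rw [Matrix.mul_assoc, nonsing_inv_mul _ ((isUnit_iff_isUnit_det _).mp hAA.isUnit)]

lemma fromCols_eq_mul_fromCols_one {A : Matrix κ ι ℝ} (hA : Function.Injective A.mulVec)
    {C : Matrix κ μ ℝ} (hC : ∀ j, ∃ x, A *ᵥ x = fun i => C i j) :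
    fromCols A C = A * fromCols 1 ((Aᵀ * A)⁻¹ * Aᵀ * C) := by
  choose X hX using hC
  have hAX : A * (of fun i j => X j i) = C := by
    ext i j
    simpa [mulVec, dotProduct, mul_apply] using congrFun (hX j) i
  rw [mul_fromCols, Matrix.mul_one, ← hAX, ← Matrix.mul_assoc ((Aᵀ * A)⁻¹ * Aᵀ),
    inv_transpose_mul_self_mul_transpose_mul_self hA, Matrix.one_mul]

lemma vecMul_fromCols_one_injective {R : Type*} [Semiring R] (X : Matrix ι μ R) :
    Function.Injective (fromCols (1 : Matrix ι ι R) X).vecMul := fun y y' h => by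
  simpa using congrArg (fun v => v ∘ Sum.inl) h

end CutSet

section Exponential

variable [DecidableEq ι]

lemma IsHermitian.exp_neg_smul_eq_cfc {B : Matrix ι ι ℝ} (hB : B.IsHermitian) (t : ℝ) :
    NormedSpace.exp (-(t • B)) = cfc (fun x => Real.exp (-(t * x))) B := by
  have hB' := hB.isSelfAdjoint
  rw [← CFC.real_exp_eq_normedSpace_exp, ← cfc_comp_neg Real.exp (t • B),
    ← cfc_comp_smul t (fun x => Real.exp (-x)) B]
  rfl

open scoped MatrixOrder in
lemma PosSemidef.tendsto_exp_neg_smul {B : Matrix ι ι ℝ} (hB : B.PosSemidef) :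
    Tendsto (fun t : ℝ => NormedSpace.exp (-(t • B))) atTop
      (nhds (cfc (fun x : ℝ => if x = 0 then (1 : ℝ) else 0) B)) := by
  simp_rw [hB.isHermitian.exp_neg_smul_eq_cfc]
  refine tendsto_cfc_fun ?_ (.of_forall fun t => by fun_prop)
  refine Metric.tendstoUniformlyOn_iff.mpr fun ε hε =>
    B.finite_real_spectrum.eventually_all.mpr fun x hx => ?_
  have hx0 : 0 ≤ x := spectrum_nonneg_of_nonneg hB.nonneg hx
  have hlim : Tendsto (fun t : ℝ => Real.exp (-(t * x))) atTop
      (nhds (if x = 0 then 1 else 0)) := by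
    split_ifs with h
    · simp [h]
    · exact Real.tendsto_exp_atBot.comp
        (tendsto_neg_atTop_atBot.comp (tendsto_id.atTop_mul_const (hx0.lt_of_ne' h)))
  simpa [dist_comm] using Metric.tendsto_nhds.mp hlim ε hε

lemma IsHermitian.cfc_eq_of_mul_eq_zero {B Q : Matrix ι ι ℝ} (hB : B.IsHermitian)
    (hQB : Q * B = 0) (hker : ∀ x, B *ᵥ x = 0 → Q *ᵥ x = x) :
    cfc (fun x : ℝ => if x = 0 then (1 : ℝ) else 0) B = Q := by
  have hB' := hB.isSelfAdjoint
  have hcont (f : ℝ → ℝ) : ContinuousOn f (spectrum ℝ B) := B.finite_real_spectrum.continuousOn f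
  set π := cfc (fun x : ℝ => if x = 0 then (1 : ℝ) else 0) B
  have hBπ : B * π = 0 := by
    rw [← cfc_id' ℝ B, ← cfc_mul _ _ _ (hcont _) (hcont _), ← cfc_zero ℝ B]
    exact cfc_congr fun x _ => by split_ifs with h <;> simp [h]
  -- `x * x⁻¹ + [x = 0] = 1` for every real `x` since `0⁻¹ = 0`, so `1 - π` factors through `B`.
  have hsplit : π + B * cfc (fun x : ℝ => x⁻¹) B = 1 := by
    nth_rw 1 [← cfc_id' ℝ B]
    rw [← cfc_mul _ _ _ (hcont _) (hcont _), ← cfc_add _ _ _ (hcont _) (hcont _),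
      ← cfc_one ℝ B]
    exact cfc_congr fun x _ => by split_ifs with h <;> simp [h]
  have hQπ : Q * π = π := ext_of_mulVec_single fun i => by
    rw [← mulVec_mulVec, hker _ (by rw [mulVec_mulVec, hBπ, zero_mulVec])]
  calc π = Q * (π + B * cfc (fun x : ℝ => x⁻¹) B) := by
        rw [Matrix.mul_add, hQπ, ← Matrix.mul_assoc, hQB, Matrix.zero_mul, add_zero]
    _ = Q := by rw [hsplit, Matrix.mul_one]

variable [Fintype κ] [DecidableEq κ]

lemma exp_kronecker_one (A : Matrix ι ι ℝ) :
    NormedSpace.exp (A ⊗ₖ (1 : Matrix κ κ ℝ)) = NormedSpace.exp A ⊗ₖ (1 : Matrix κ κ ℝ) := by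
  let f := (kroneckerAlgEquiv ι κ ℝ).toAlgHom.comp Algebra.TensorProduct.includeLeft
  have hf : Continuous f := f.toLinearMap.continuous_of_finiteDimensional
  have hA : A ∈ Metric.eball 0 (NormedSpace.expSeries ℝ (Matrix ι ι ℝ)).radius := by
    simp [NormedSpace.expSeries_radius_eq_top]
  simpa [f] using (NormedSpace.map_exp_of_mem_ball f hf A hA).symm

lemma PosSemidef.tendsto_exp_neg_smul_kronecker_one_mulVec {B Q : Matrix ι ι ℝ}
    (hB : B.PosSemidef) (hQB : Q * B = 0) (hker : ∀ x, B *ᵥ x = 0 → Q *ᵥ x = x)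
    (x₀ : ι × κ → ℝ) :
    Tendsto (fun t : ℝ => NormedSpace.exp (-(t • (B ⊗ₖ (1 : Matrix κ κ ℝ)))) *ᵥ x₀) atTop
      (nhds ((Q ⊗ₖ (1 : Matrix κ κ ℝ)) *ᵥ x₀)) := by
  have hlim := hB.isHermitian.cfc_eq_of_mul_eq_zero hQB hker ▸ hB.tendsto_exp_neg_smul
  have hneg (t : ℝ) : -(t • (B ⊗ₖ (1 : Matrix κ κ ℝ))) = (-(t • B)) ⊗ₖ (1 : Matrix κ κ ℝ) := by
    rw [← neg_smul, ← neg_smul, smul_kronecker]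
  simp_rw [hneg, exp_kronecker_one]
  have hcont : Continuous fun A : Matrix ι ι ℝ => A ⊗ₖ (1 : Matrix κ κ ℝ) :=
    continuous_pi fun p => continuous_pi fun p' =>
      (continuous_id.matrix_elem p.1 p'.1).mul continuous_const
  exact ((hcont.matrix_mulVec continuous_const).tendsto Q).comp hlim

end Exponential

lemma kronecker_one_mulVec_apply {R : Type*} [CommSemiring R] [Fintype κ] [DecidableEq κ]
    (A : Matrix μ ι R) (x : ι × κ → R) (p : μ × κ) :
    ((A ⊗ₖ (1 : Matrix κ κ R)) *ᵥ x) p = (A *ᵥ fun j => x (j, p.2)) p.1 := by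
  simp [mulVec, dotProduct, kroneckerMap_apply, one_apply, Fintype.sum_prod_type]

section Consensus

variable [Fintype μ] [DecidableEq μ]

lemma average_kronecker_one_mulVec (x : ι × μ → ℝ) :
    (((Fintype.card ι : ℝ)⁻¹ • of fun _ _ : ι => (1 : ℝ)) ⊗ₖ (1 : Matrix μ μ ℝ)) *ᵥ x =
      fun p => (Fintype.card ι : ℝ)⁻¹ * ∑ j, x (j, p.2) := by
  ext p
  rw [kronecker_one_mulVec_apply]
  simp [mulVec, dotProduct, Finset.mul_sum]

variable [DecidableEq ι] [Fintype κ]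

lemma PosDef.tendsto_exp_neg_smul_mul_mul_transpose_kronecker_one_mulVec {A : Matrix ι κ ℝ}
    {M : Matrix κ κ ℝ} (hM : M.PosDef) (hA : LinearMap.ker Aᵀ.mulVecLin = ℝ ∙ fun _ => 1)
    (x₀ : ι × μ → ℝ) :
    Tendsto (fun t : ℝ => NormedSpace.exp (-(t • ((A * M * Aᵀ) ⊗ₖ (1 : Matrix μ μ ℝ)))) *ᵥ x₀)
      atTop (nhds ((((Fintype.card ι : ℝ)⁻¹ • of fun _ _ : ι => (1 : ℝ)) ⊗ₖ
        (1 : Matrix μ μ ℝ)) *ᵥ x₀)) := by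
  have hA1 : (fun _ => (1 : ℝ)) ᵥ* A = 0 := by
    simpa using hA.ge (Submodule.mem_span_singleton_self _)
  have hL : (A * M * Aᵀ).PosSemidef := by simpa using hM.posSemidef.mul_mul_conjTranspose_same A
  refine hL.tendsto_exp_neg_smul_kronecker_one_mulVec ?_ (fun y hy => ?_) x₀
  · have h1L : (fun _ => (1 : ℝ)) ᵥ* (A * M * Aᵀ) = 0 := by
      rw [← vecMul_vecMul, ← vecMul_vecMul, hA1, zero_vecMul, zero_vecMul]
    ext i j
    simpa [mul_apply, vecMul, dotProduct, ← Finset.mul_sum] using Or.inr (congrFun h1L j)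
  · have : y ∈ LinearMap.ker Aᵀ.mulVecLin :=
      hM.transpose_mulVec_eq_zero_of_mul_mul_transpose_mulVec A hy
    obtain ⟨a, rfl⟩ := Submodule.mem_span_singleton.mp (hA ▸ this)
    ext i
    have : Nonempty ι := ⟨i⟩
    simp [mulVec, dotProduct]

end Consensus

end Matrix

theorem perturbed_consensus_converges_to_agreement_general
    (n c q : ℕ) (hn : 2 ≤ n)
    (ET : Matrix (Fin n) (Fin (n - 1)) ℝ) (EC : Matrix (Fin n) (Fin c) ℝ)
    (E : Matrix (Fin n) (Fin (n - 1) ⊕ Fin c) ℝ)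
    (hE : E = Matrix.fromCols ET EC)
    (hE1 : Eᵀ *ᵥ (fun _ => (1 : ℝ)) = 0)
    (hrankT : ET.rank = n - 1)
    (hcol : ∀ j : Fin c, ∃ x : Fin (n - 1) → ℝ, ET *ᵥ x = fun i => EC i j)
    (w : Fin (n - 1) ⊕ Fin c → ℝ) (hw : ∀ k, 0 < w k)
    (R : Matrix (Fin (n - 1)) (Fin (n - 1) ⊕ Fin c) ℝ)
    (hR : R = Matrix.fromCols (1 : Matrix (Fin (n - 1)) (Fin (n - 1)) ℝ)
      ((ETᵀ * ET)⁻¹ * ETᵀ * EC))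
    (P : Matrix (Fin (n - 1) ⊕ Fin c) (Fin q) ℝ)
    (d : Fin q → ℝ)
    (hsmall : ‖Matrix.diagonal d‖ <
      ‖Pᵀ * Rᵀ * (R * Matrix.diagonal w * Rᵀ)⁻¹ * R * P‖⁻¹)
    (LΔ : Matrix (Fin n) (Fin n) ℝ)
    (hLΔ : LΔ = E * (Matrix.diagonal w + P * Matrix.diagonal d * Pᵀ) * Eᵀ)
    (D : ℕ) (x₀ : Fin n × Fin D → ℝ) :
    Tendsto
      (fun t : ℝ =>
        (NormedSpace.exp (-(t • (LΔ ⊗ₖ (1 : Matrix (Fin D) (Fin D) ℝ))))) *ᵥ x₀)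
      atTop
      (nhds ((((n : ℝ)⁻¹ • Matrix.of (fun _ _ : Fin n => (1 : ℝ))) ⊗ₖ
        (1 : Matrix (Fin D) (Fin D) ℝ)) *ᵥ x₀)) ∧
    ∃ ω : Fin D → ℝ,
      ((((n : ℝ)⁻¹ • Matrix.of (fun _ _ : Fin n => (1 : ℝ))) ⊗ₖ
        (1 : Matrix (Fin D) (Fin D) ℝ)) *ᵥ x₀) = fun p => ω p.2 := by
  have hET : Function.Injective ET.mulVec := mulVec_injective_of_rank_eq_card (by simpa)
  have hER : E = ET * R := by rw [hE, hR]; exact fromCols_eq_mul_fromCols_one hET hcol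
  have hRinj : Function.Injective R.vecMul := hR ▸ vecMul_fromCols_one_injective _
  have hM := posDef_mul_add_mul_transpose_of_norm_lt (posDef_diagonal_iff.mpr hw) hRinj
    (isHermitian_diagonal d) P hsmall
  have hET1 : ETᵀ *ᵥ (fun _ => (1 : ℝ)) = 0 := hRinj <| by
    change (ETᵀ *ᵥ _) ᵥ* R = 0 ᵥ* R
    rw [zero_vecMul, ← mulVec_transpose, mulVec_mulVec, ← transpose_mul, ← hER, hE1]
  have hkerET := ker_mulVecLin_eq_span_singleton (by rw [rank_transpose, hrankT]; simp; omega)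
    (fun h => by simpa using congrFun h ⟨0, by omega⟩) hET1
  have hL : LΔ = ET * (R * (diagonal w + P * diagonal d * Pᵀ) * Rᵀ) * ETᵀ := by
    simp [hLΔ, hER, Matrix.mul_assoc]
  have hlim := hM.tendsto_exp_neg_smul_mul_mul_transpose_kronecker_one_mulVec hkerET x₀
  have hagree := average_kronecker_one_mulVec x₀
  rw [Fintype.card_fin, ← hL] at hlim
  rw [Fintype.card_fin] at hagree
  exact ⟨hlim, fun e => (n : ℝ)⁻¹ * ∑ j, x₀ (j, e), hagree⟩

/-- Under the multi-attack robust-stability hypotheses, the perturbed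
continuous-time consensus protocol achieves consensus: for every `D ≥ 1` and every initial state
`x₀ ∈ ℝ^{nD}`, with `L_Δ = E (W + P Δ Pᵀ) Eᵀ`, the trajectory `exp(−t (L_Δ ⊗ I_D)) x₀` converges
as `t → ∞` to `((𝟙𝟙ᵀ/n) ⊗ I_D) x₀`, which lies in the agreement set `{𝟙ₙ ⊗ ω : ω ∈ ℝ^D}`. -/
theorem perturbed_consensus_converges_to_agreement
    (n c q : ℕ) (hn : 2 ≤ n) (hq : 0 < q)
    (ET : Matrix (Fin n) (Fin (n - 1)) ℝ) (EC : Matrix (Fin n) (Fin c) ℝ)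
    (E : Matrix (Fin n) (Fin (n - 1) ⊕ Fin c) ℝ)
    (hE : E = Matrix.fromCols ET EC)
    (hE1 : Eᵀ *ᵥ (fun _ => (1 : ℝ)) = 0)
    (hrankT : ET.rank = n - 1)
    (hcol : ∀ j : Fin c, ∃ x : Fin (n - 1) → ℝ, ET *ᵥ x = fun i => EC i j)
    (w : Fin (n - 1) ⊕ Fin c → ℝ) (hw : ∀ k, 0 < w k)
    (R : Matrix (Fin (n - 1)) (Fin (n - 1) ⊕ Fin c) ℝ)
    (hR : R = Matrix.fromCols (1 : Matrix (Fin (n - 1)) (Fin (n - 1)) ℝ)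
      ((ETᵀ * ET)⁻¹ * ETᵀ * EC))
    (s : Fin q → Fin (n - 1) ⊕ Fin c) (hs : Function.Injective s)
    (P : Matrix (Fin (n - 1) ⊕ Fin c) (Fin q) ℝ)
    (hP : P = Matrix.of fun i j => if i = s j then (1 : ℝ) else 0)
    (d : Fin q → ℝ)
    (hsmall : ‖Matrix.diagonal d‖ <
      ‖Pᵀ * Rᵀ * (R * Matrix.diagonal w * Rᵀ)⁻¹ * R * P‖⁻¹)
    (LΔ : Matrix (Fin n) (Fin n) ℝ)
    (hLΔ : LΔ = E * (Matrix.diagonal w + P * Matrix.diagonal d * Pᵀ) * Eᵀ)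
    (D : ℕ) (hD : 1 ≤ D) (x₀ : Fin n × Fin D → ℝ) :
    Tendsto
      (fun t : ℝ =>
        (NormedSpace.exp (-(t • (LΔ ⊗ₖ (1 : Matrix (Fin D) (Fin D) ℝ))))) *ᵥ x₀)
      atTop
      (nhds ((((n : ℝ)⁻¹ • Matrix.of (fun _ _ : Fin n => (1 : ℝ))) ⊗ₖ
        (1 : Matrix (Fin D) (Fin D) ℝ)) *ᵥ x₀)) ∧
    ∃ ω : Fin D → ℝ,
      ((((n : ℝ)⁻¹ • Matrix.of (fun _ _ : Fin n => (1 : ℝ))) ⊗ₖ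
        (1 : Matrix (Fin D) (Fin D) ℝ)) *ᵥ x₀) = fun p => ω p.2 :=
  perturbed_consensus_converges_to_agreement_general n c q hn ET EC E hE hE1 hrankT hcol w hw R hR P
    d hsmall LΔ hLΔ D x₀
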